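/- Let K be a number field regarded as a subfield of ℂ, let d > 2 and let r ≥ 2 be an EVEN integer, let ε ∈ ℂ be a primitive d-th root of unity, σ ∈ {1,−1}, u ∈ ℂ∖{0}, v ∈ ℂ, and set l(x) = ux + v. Suppose the polynomial h₁ = l∘(σ·T_r)∘l⁻¹ has all of its coefficients in K. Then: (i) if the conic C_{ε,u,v} contains infinitely many points of K × K, then u ∈ K, v ∈ K and ε + ε⁻¹ ∈ K; and (ii) conversely, if u, v, ε + ε⁻¹ ∈ K, then the point (2u + v, u(ε + ε⁻¹) + v) is a K-point of C_{ε,u,v}, and C_{ε,u,v} contains infinitely many points of K × K. -/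

import Mathlib

open Polynomial

/-- The conic `C_{ε,u,v}`. -/
def conicSet (ε u v : ℂ) : Set (ℂ × ℂ) :=
  {p | p.2 ^ 2 + (ε + ε⁻¹ - 2) * v * (p.1 + p.2) - (ε + ε⁻¹) * p.1 * p.2
    + p.1 ^ 2 + (2 - ε - ε⁻¹) * v ^ 2 + (ε - ε⁻¹) ^ 2 * u ^ 2 = 0}

/-!
Write `c = ε + ε⁻¹`. Since `T_r` is monic and even, the two leading coefficients of `h₁` are
`a = σ u^{1-r}` and `-r v a`, so `v ∈ K`; then `h₁(v) = v + σ u T_r(0)` with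
`T_r(0) = 2 (-1)^{r/2} ≠ 0` gives `u ∈ K`.

In the coordinates `x - v, y - v` the conic reads `x² - c x y + y² = (4 - c²) u²`. Two
`K`-points with different values of `x y` determine `c ∈ K` linearly, and only finitely many
points share one value of `x y`. Conversely, since `c² ≠ 4` when `d > 2`, the lines of rational slope through the
`K`-point `(2u + v, c u + v)` meet the conic in infinitely many further `K`-points.
-/

theorem Complex.exists_ne_zero_add_inv_eq (w : ℂ) : ∃ z : ℂ, z ≠ 0 ∧ z + z⁻¹ = w := by
  obtain ⟨z, hz⟩ := Complex.exists_root (f := X ^ 2 - C w * X + 1) (by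
    rw [show (X ^ 2 - C w * X + 1 : ℂ[X]).degree = 2 by compute_degree!]; norm_num)
  have hz : z ^ 2 - w * z + 1 = 0 := by simpa using hz
  have hz0 : z ≠ 0 := by rintro rfl; simp at hz
  exact ⟨z, hz0, by field_simp; linear_combination hz⟩

theorem Polynomial.eq_of_eval_add_inv_eq {p q : ℂ[X]}
    (h : ∀ z : ℂ, z ≠ 0 → p.eval (z + z⁻¹) = q.eval (z + z⁻¹)) : p = q :=
  Polynomial.funext fun w ↦ by
    obtain ⟨z, hz, rfl⟩ := Complex.exists_ne_zero_add_inv_eq w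
    exact h z hz

theorem Polynomial.eval_mem {R S : Type*} [Semiring R] [SetLike S R] [SubsemiringClass S R]
    {s : S} {p : R[X]} (hp : ∀ n, p.coeff n ∈ s) {x : R} (hx : x ∈ s) : p.eval x ∈ s := by
  rw [eval_eq_sum_range]
  exact sum_mem fun i _ ↦ mul_mem (hp i) (pow_mem hx i)

theorem Polynomial.coeff_eq_zero_of_comp_neg_X {R : Type*} [CommRing R] [IsAddTorsionFree R]
    {p : R[X]} (hp : p.comp (-X) = p) {n : ℕ} (hn : Odd n) : p.coeff n = 0 := by
  have h := congrArg (coeff · n) hp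
  rw [show (-X : R[X]) = C (-1) * X by simp, comp_C_mul_X_coeff, hn.neg_one_pow] at h
  exact self_eq_neg.mp (by simpa using h.symm)

theorem Polynomial.coeff_comp_X_add_C_of_natDegree_le {R : Type*} [CommSemiring R] {p : R[X]}
    {n : ℕ} (hp : p.natDegree ≤ n + 1) (b : R) :
    (p.comp (X + C b)).coeff n = p.coeff n + (n + 1) * b * p.coeff (n + 1) := by
  conv_lhs => rw [p.as_sum_range' (n + 2) (by omega)]
  simp only [sum_comp, monomial_comp, finsetSum_coeff, coeff_C_mul, coeff_X_add_C_pow]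
  rw [Finset.sum_range_succ, Finset.sum_range_succ, Finset.sum_eq_zero fun j hj ↦ by
    rw [Nat.choose_eq_zero_of_lt (Finset.mem_range.mp hj), Nat.cast_zero, mul_zero, mul_zero]]
  simp [show n + 1 - n = 1 by omega]
  ring

theorem Polynomial.coeff_affine_conj_of_natDegree_le {R : Type*} [CommRing R] {t : R[X]} {n : ℕ}
    (ht : t.natDegree ≤ n + 2) (a b c : R) :
    ((C a * X + C b).comp (t.comp (C c * (X - C b)))).coeff (n + 1) =
      a * (c ^ (n + 1) * t.coeff (n + 1) - (n + 2) * b * (c ^ (n + 2) * t.coeff (n + 2))) := by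
  have hcomp : t.comp (C c * (X - C b)) = (t.comp (C c * X)).comp (X + C (-b)) := by
    rw [comp_assoc, mul_comp, C_comp, X_comp, C_neg, ← sub_eq_add_neg]
  have hdeg : (t.comp (C c * X)).natDegree ≤ n + 2 :=
    natDegree_le_iff_coeff_eq_zero.mpr fun k hk ↦ by
      rw [comp_C_mul_X_coeff, coeff_eq_zero_of_natDegree_lt (ht.trans_lt hk), zero_mul]
  rw [add_comp, mul_comp, C_comp, X_comp, C_comp, coeff_add, coeff_C_mul, coeff_C_succ, add_zero,
    hcomp, coeff_comp_X_add_C_of_natDegree_le hdeg, comp_C_mul_X_coeff, comp_C_mul_X_coeff]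
  push_cast
  ring

theorem Subfield.mem_of_coeff_affine_conj_mem {F : Type*} [Field F] [CharZero F] (K : Subfield F)
    {t : F[X]} {n : ℕ} (ht : t.natDegree ≤ n + 2) (ht₁ : t.coeff (n + 1) = 0)
    (ht₂ : t.coeff (n + 2) ≠ 0) {a b c : F} (ha : a ≠ 0) (hc : c ≠ 0)
    (hK : ∀ k, ((C a * X + C b).comp (t.comp (C c * (X - C b)))).coeff k ∈ K) : b ∈ K := by
  set h := (C a * X + C b).comp (t.comp (C c * (X - C b)))
  have hlead : h.coeff (n + 2) = a * (c ^ (n + 2) * t.coeff (n + 2)) := by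
    have := coeff_affine_conj_of_natDegree_le (t := t) (n := n + 1) (by omega) a b c
    rwa [coeff_eq_zero_of_natDegree_lt (show t.natDegree < n + 1 + 2 by omega), mul_zero, mul_zero,
      sub_zero] at this
  have hnext := coeff_affine_conj_of_natDegree_le ht a b c
  rw [ht₁, mul_zero, zero_sub] at hnext
  have hn : (n : F) + 2 ≠ 0 := by norm_cast
  have hb : b = -h.coeff (n + 1) / ((n + 2) * h.coeff (n + 2)) := by
    rw [hnext, hlead]
    field_simp
  rw [hb]
  exact div_mem (neg_mem (hK _)) (mul_mem (add_mem (natCast_mem K n) (ofNat_mem K 2)) (hK _))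

namespace Polynomial.Chebyshev

variable {R : Type*} [CommRing R] [IsDomain R] [Invertible (2 : R)]

theorem natDegree_C_natCast (n : ℕ) : (C R n).natDegree = n := by
  have : NeZero (2 : R) := ⟨Invertible.ne_zero 2⟩
  rw [C_eq_two_mul_T_comp_half_mul_X, ← Polynomial.C_ofNat,
    natDegree_C_mul (Invertible.ne_zero 2), natDegree_comp, natDegree_T,
    natDegree_C_mul_X _ (Invertible.ne_zero _)]
  simp

theorem leadingCoeff_C_natCast {n : ℕ} (hn : n ≠ 0) : (C R n).leadingCoeff = 1 := by
  have : NeZero (2 : R) := ⟨Invertible.ne_zero 2⟩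
  rw [C_eq_two_mul_T_comp_half_mul_X, ← Polynomial.C_ofNat,
    leadingCoeff_C_mul_of_isUnit (isUnit_of_invertible 2),
    leadingCoeff_comp (by rw [natDegree_C_mul_X _ (Invertible.ne_zero _)]; simp), leadingCoeff_T,
    natDegree_T, leadingCoeff_C_mul_X, Int.natAbs_natCast, ← mul_assoc, ← pow_succ',
    Nat.sub_add_cancel (Nat.one_le_iff_ne_zero.mpr hn), ← mul_pow, mul_invOf_self, one_pow]

end Polynomial.Chebyshev

section AddInvPowers

variable {T : ℕ → ℂ[X]}
  (hT : ∀ (r : ℕ) (z : ℂ), z ≠ 0 → (T r).eval (z + z⁻¹) = z ^ r + z⁻¹ ^ r)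
include hT

theorem T_eq_chebyshev_C (r : ℕ) : T r = Chebyshev.C ℂ r :=
  eq_of_eval_add_inv_eq fun z hz ↦ by
    rw [hT r z hz, ← dickson_one_one_eq_chebyshev_C,
      dickson_one_one_eval_add_inv z z⁻¹ (mul_inv_cancel₀ hz)]

theorem T_comp_neg_X {r : ℕ} (hr : Even r) : (T r).comp (-X) = T r :=
  eq_of_eval_add_inv_eq fun z hz ↦ by
    rw [eval_comp, eval_neg, eval_X, neg_add, ← inv_neg, hT r _ (neg_ne_zero.mpr hz), hT r z hz,
      hr.neg_pow, inv_neg, hr.neg_pow]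

theorem T_two_mul_eval_zero (k : ℕ) : (T (2 * k)).eval 0 = 2 * (-1) ^ k := by
  have h := hT (2 * k) Complex.I Complex.I_ne_zero
  rw [Complex.inv_I, add_neg_cancel, pow_mul, pow_mul, neg_sq, Complex.I_sq] at h
  rw [h, two_mul]

theorem mem_of_coeff_chebyshev_conj_mem (K : Subfield ℂ) {r : ℕ} (hr : 2 ≤ r) (hre : Even r)
    {σ : ℂ} (hσ : σ = 1 ∨ σ = -1) {u : ℂ} (hu : u ≠ 0) {v : ℂ}
    (hK : ∀ n, ((C u * X + C v).comp ((C σ * T r).comp (C u⁻¹ * (X - C v)))).coeff n ∈ K) :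
    u ∈ K ∧ v ∈ K := by
  have hσ0 : σ ≠ 0 := by rcases hσ with rfl | rfl <;> norm_num
  have hσK : σ ∈ K := by rcases hσ with rfl | rfl <;> simp
  have hdeg : (T r).natDegree = r := by rw [T_eq_chebyshev_C hT, Chebyshev.natDegree_C_natCast]
  have hlead : (T r).coeff r = 1 := by
    nth_rw 2 [← hdeg]
    rw [← leadingCoeff, T_eq_chebyshev_C hT, Chebyshev.leadingCoeff_C_natCast (by omega)]
  obtain ⟨n, rfl⟩ : ∃ n, r = n + 2 := ⟨r - 2, by omega⟩
  have hv : v ∈ K := by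
    refine K.mem_of_coeff_affine_conj_mem (natDegree_C_mul_le _ _ |>.trans hdeg.le) ?_ ?_ hu
      (inv_ne_zero hu) hK
    · rw [coeff_C_mul, coeff_eq_zero_of_comp_neg_X (T_comp_neg_X hT hre)
        (by simpa [parity_simps] using hre), mul_zero]
    · rwa [coeff_C_mul, hlead, mul_one]
  obtain ⟨k, hk⟩ := hre
  have hu_eq : u = (((C u * X + C v).comp ((C σ * T (n + 2)).comp (C u⁻¹ * (X - C v)))).eval v - v)
      / (σ * (2 * (-1) ^ k)) := by
    rw [hk, ← two_mul]
    simp only [eval_comp, eval_add, eval_sub, eval_mul, eval_C, eval_X, sub_self, mul_zero,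
      T_two_mul_eval_zero hT]
    field_simp
    ring
  refine ⟨?_, hv⟩
  rw [hu_eq]
  exact div_mem (sub_mem (eval_mem hK hv) hv)
    (mul_mem hσK (mul_mem (ofNat_mem K 2) (pow_mem (neg_mem (one_mem K)) k)))

end AddInvPowers

theorem IsPrimitiveRoot.add_inv_sq_ne_four {F : Type*} [Field F] {ε : F} {d : ℕ}
    (hε : IsPrimitiveRoot ε d) (hd : 2 < d) : (ε + ε⁻¹) ^ 2 ≠ 4 := by
  intro h
  have hε0 : ε ≠ 0 := hε.ne_zero (by omega)
  have hsq : (ε ^ 2 - 1) ^ 2 = 0 := by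
    field_simp at h
    linear_combination h
  have := Nat.le_of_dvd two_pos <|
    hε.dvd_of_pow_eq_one 2 (sub_eq_zero.mp (pow_eq_zero_iff two_ne_zero |>.mp hsq))
  omega

theorem mem_conicSet_iff {ε : ℂ} (hε : ε ≠ 0) (u v : ℂ) (p : ℂ × ℂ) :
    p ∈ conicSet ε u v ↔ (p.1 - v) ^ 2 - (ε + ε⁻¹) * (p.1 - v) * (p.2 - v) + (p.2 - v) ^ 2
      = (4 - (ε + ε⁻¹) ^ 2) * u ^ 2 := by
  have h : ε * ε⁻¹ = 1 := mul_inv_cancel₀ hε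
  rw [conicSet, Set.mem_ofPred_eq]
  constructor <;> intro hp
  · linear_combination hp + 4 * u ^ 2 * h
  · linear_combination hp - 4 * u ^ 2 * h

theorem finite_setOf_mul_eq_and_sq_add_sq_eq {F : Type*} [Field F] (v s t : F) :
    {p : F × F | (p.1 - v) * (p.2 - v) = t ∧ (p.1 - v) ^ 2 + (p.2 - v) ^ 2 = s}.Finite := by
  set Q : F[X] := X ^ 4 - C s * X ^ 2 + C (t ^ 2)
  have hQ : Q ≠ 0 := by
    have : Q.Monic := by unfold Q; monicity!
    exact this.ne_zero
  have hroots : {x : F | Q.IsRoot (x - v)}.Finite :=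
    (Q.finite_setOfPred_isRoot hQ).preimage sub_left_injective.injOn
  refine (hroots.prod hroots).subset fun p ⟨ht, hs⟩ ↦ ⟨?_, ?_⟩
  · show Q.eval (p.1 - v) = 0
    simp only [Q, eval_add, eval_sub, eval_mul, eval_pow, eval_X, eval_C]
    linear_combination (p.1 - v) ^ 2 * hs - ((p.1 - v) * (p.2 - v) + t) * ht
  · show Q.eval (p.2 - v) = 0
    simp only [Q, eval_add, eval_sub, eval_mul, eval_pow, eval_X, eval_C]
    linear_combination (p.2 - v) ^ 2 * hs - ((p.1 - v) * (p.2 - v) + t) * ht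

theorem Subfield.mem_of_infinite_conic {F : Type*} [Field F] (K : Subfield F) {c s v : F}
    (hv : v ∈ K) {S : Set (F × F)} (hS : S.Infinite) (hSK : ∀ p ∈ S, p.1 ∈ K ∧ p.2 ∈ K)
    (hSc : ∀ p ∈ S, (p.1 - v) ^ 2 - c * (p.1 - v) * (p.2 - v) + (p.2 - v) ^ 2 = s) :
    c ∈ K := by
  obtain ⟨p₀, hp₀⟩ := hS.nonempty
  obtain ⟨p, hp, hne⟩ : ∃ p ∈ S, (p.1 - v) * (p.2 - v) ≠ (p₀.1 - v) * (p₀.2 - v) := by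
    by_contra! hall
    refine hS ((finite_setOf_mul_eq_and_sq_add_sq_eq v (s + c * ((p₀.1 - v) * (p₀.2 - v)))
      ((p₀.1 - v) * (p₀.2 - v))).subset fun p hp ↦ ⟨hall p hp, ?_⟩)
    linear_combination hSc p hp + c * hall p hp
  have hc : c = ((p.1 - v) ^ 2 + (p.2 - v) ^ 2 - (p₀.1 - v) ^ 2 - (p₀.2 - v) ^ 2)
      / ((p.1 - v) * (p.2 - v) - (p₀.1 - v) * (p₀.2 - v)) := by
    rw [eq_div_iff (sub_ne_zero.mpr hne)]
    linear_combination hSc p₀ hp₀ - hSc p hp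
  have h₁ := sub_mem (hSK p hp).1 hv
  have h₂ := sub_mem (hSK p hp).2 hv
  have h₃ := sub_mem (hSK p₀ hp₀).1 hv
  have h₄ := sub_mem (hSK p₀ hp₀).2 hv
  rw [hc]
  exact div_mem (sub_mem (sub_mem (add_mem (pow_mem h₁ 2) (pow_mem h₂ 2)) (pow_mem h₃ 2))
    (pow_mem h₄ 2)) (sub_mem (mul_mem h₁ h₂) (mul_mem h₃ h₄))

theorem Subfield.infinite_setOf_conic {F : Type*} [Field F] [CharZero F] (K : Subfield F)
    {c u v : F} (hc : c ^ 2 ≠ 4) (hu : u ≠ 0) (hcK : c ∈ K) (huK : u ∈ K) (hvK : v ∈ K) :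
    {p : F × F | (p.1 - v) ^ 2 - c * (p.1 - v) * (p.2 - v) + (p.2 - v) ^ 2 = (4 - c ^ 2) * u ^ 2
      ∧ p.1 ∈ K ∧ p.2 ∈ K}.Infinite := by
  set Q : F[X] := X ^ 2 - C c * X + 1
  have hQ : Q ≠ 0 := by
    have : Q.Monic := by unfold Q; monicity!
    exact this.ne_zero
  have hbad : {n : ℕ | (n : F) ^ 2 - c * n + 1 = 0}.Finite :=
    ((Q.finite_setOfPred_isRoot hQ).preimage Nat.cast_injective.injOn).subset fun n hn ↦ by
      simpa [Q] using hn
  set w : ℕ → F := fun n ↦ (c ^ 2 - 4) * u / ((n : F) ^ 2 - c * n + 1)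
  refine Set.infinite_of_injOn_mapsTo (f := fun n ↦ (v + 2 * u + w n, v + c * u + n * w n))
    (fun m _ n hn hmn ↦ ?_) (fun n hn ↦ ?_) hbad.infinite_compl
  · obtain ⟨h₁, h₂⟩ :
        v + 2 * u + w m = v + 2 * u + w n ∧ v + c * u + m * w m = v + c * u + n * w n :=
      Prod.ext_iff.mp hmn
    have hw : w n ≠ 0 := div_ne_zero (mul_ne_zero (sub_ne_zero.mpr hc) hu) hn
    rw [add_left_cancel h₁] at h₂
    exact_mod_cast mul_right_cancel₀ hw (add_left_cancel h₂)
  · have hwn : w n * ((n : F) ^ 2 - c * n + 1) = (c ^ 2 - 4) * u := div_mul_cancel₀ _ hn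
    have hnK : (n : F) ∈ K := natCast_mem K n
    have hwK : w n ∈ K := div_mem (mul_mem (sub_mem (pow_mem hcK 2) (ofNat_mem K 4)) huK)
      (add_mem (sub_mem (pow_mem hnK 2) (mul_mem hcK hnK)) (one_mem K))
    refine ⟨?_, ?_, ?_⟩
    · dsimp only
      linear_combination w n * hwn
    · exact add_mem (add_mem hvK (mul_mem (ofNat_mem K 2) huK)) hwK
    · exact add_mem (add_mem hvK (mul_mem hcK huK)) (mul_mem hnK hwK)

theorem stmt18_general (K : Subfield ℂ)
    (T : ℕ → Polynomial ℂ)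
    (hT : ∀ (r : ℕ) (z : ℂ), z ≠ 0 → (T r).eval (z + z⁻¹) = z ^ r + z⁻¹ ^ r)
    (d r : ℕ) (hd : 2 < d) (hr : 2 ≤ r) (hre : Even r)
    (ε : ℂ) (hε : IsPrimitiveRoot ε d)
    (σ : ℂ) (hσ : σ = 1 ∨ σ = -1)
    (u : ℂ) (hu : u ≠ 0) (v : ℂ)
    (h₁ : Polynomial ℂ)
    (hh₁ : h₁ = (C u * X + C v).comp ((C σ * T r).comp (C u⁻¹ * (X - C v))))
    (hh₁K : ∀ n : ℕ, h₁.coeff n ∈ K) :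
    ({p : ℂ × ℂ | p ∈ conicSet ε u v ∧ p.1 ∈ K ∧ p.2 ∈ K}.Infinite →
        u ∈ K ∧ v ∈ K ∧ ε + ε⁻¹ ∈ K) ∧
    (u ∈ K → v ∈ K → ε + ε⁻¹ ∈ K →
      (2 * u + v, u * (ε + ε⁻¹) + v) ∈ conicSet ε u v ∧
        (2 * u + v : ℂ) ∈ K ∧ (u * (ε + ε⁻¹) + v : ℂ) ∈ K ∧
        {p : ℂ × ℂ | p ∈ conicSet ε u v ∧ p.1 ∈ K ∧ p.2 ∈ K}.Infinite) := by
  subst hh₁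
  obtain ⟨huK, hvK⟩ := mem_of_coeff_chebyshev_conj_mem hT K hr hre hσ hu hh₁K
  simp only [mem_conicSet_iff (hε.ne_zero (by omega))]
  refine ⟨fun hinf ↦ ⟨huK, hvK, K.mem_of_infinite_conic hvK hinf (fun _ hp ↦ hp.2)
    (fun _ hp ↦ hp.1)⟩, fun _ _ hcK ↦ ⟨by ring, ?_, ?_,
    K.infinite_setOf_conic (hε.add_inv_sq_ne_four hd) hu hcK huK hvK⟩⟩
  · exact add_mem (mul_mem (ofNat_mem K 2) huK) hvK
  · exact add_mem (mul_mem huK hcK) hvK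

theorem stmt18 (K : Subfield ℂ) [NumberField K]
    (T : ℕ → Polynomial ℂ)
    (hT : ∀ (r : ℕ) (z : ℂ), z ≠ 0 → (T r).eval (z + z⁻¹) = z ^ r + z⁻¹ ^ r)
    (d r : ℕ) (hd : 2 < d) (hr : 2 ≤ r) (hre : Even r)
    (ε : ℂ) (hε : IsPrimitiveRoot ε d)
    (σ : ℂ) (hσ : σ = 1 ∨ σ = -1)
    (u : ℂ) (hu : u ≠ 0) (v : ℂ)
    (h₁ : Polynomial ℂ)
    (hh₁ : h₁ = (C u * X + C v).comp ((C σ * T r).comp (C u⁻¹ * (X - C v))))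
    (hh₁K : ∀ n : ℕ, h₁.coeff n ∈ K) :
    ({p : ℂ × ℂ | p ∈ conicSet ε u v ∧ p.1 ∈ K ∧ p.2 ∈ K}.Infinite →
        u ∈ K ∧ v ∈ K ∧ ε + ε⁻¹ ∈ K) ∧
    (u ∈ K → v ∈ K → ε + ε⁻¹ ∈ K →
      (2 * u + v, u * (ε + ε⁻¹) + v) ∈ conicSet ε u v ∧
        (2 * u + v : ℂ) ∈ K ∧ (u * (ε + ε⁻¹) + v : ℂ) ∈ K ∧
        {p : ℂ × ℂ | p ∈ conicSet ε u v ∧ p.1 ∈ K ∧ p.2 ∈ K}.Infinite) :=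
  stmt18_general K T hT d r hd hr hre ε hε σ hσ u hu v h₁ hh₁ hh₁K
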